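/- arXiv:1807.05257 — 2 statements merged into one kernel-verified Lean document; each statement's English description precedes it below -/
import Mathlib

section
/- For every a in (0,1), every even nonnegative integer k, and every x > 1, a·k!/x^{k+1} < ψ⁽ᵏ⁾(x+a) - ψ⁽ᵏ⁾(x) < ψ⁽ᵏ⁾(a) - ψ⁽ᵏ⁾(1) + k!·(a/x^{k+1} + 1/a^{k+1} - a). -/
/-!
On `(0, ∞)` the digamma function is `ψ x = ψ 1 - ∑ₙ ((x + n)⁻¹ - (1 + n)⁻¹)`: both sides are
monotone, satisfy `f (x + 1) = f x + x⁻¹` and agree at `1`, and such functions coincide. Termwise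
differentiation gives `ψ⁽ᵏ⁾ y - ψ⁽ᵏ⁾ x = (-1)^(k+1) k! ∑ₙ ((y + n)^(-k-1) - (x + n)^(-k-1))`.
Subtracting the telescoping series `a x^(-k-1) = a ∑ₙ ((x + n)^(-k-1) - (x + n + 1)^(-k-1))`, for
even `k` we get `ψ⁽ᵏ⁾ (x + a) - ψ⁽ᵏ⁾ x = k! (a x^(-k-1) + ∑ₙ g (x + n))`, where
`g t = (1 - a) t^(-k-1) + a (t + 1)^(-k-1) - (t + a)^(-k-1)` is the Jensen gap of the strictly
convex `t ↦ t^(-k-1)`. So `g > 0`, which is the lower bound, and `g` is strictly decreasing, its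
derivative being `-(k + 1)` times the Jensen gap of `t ↦ t^(-k-2)`; comparing the sums at `x` and
at `1` and using `ψ⁽ᵏ⁾ (1 + a) = ψ⁽ᵏ⁾ a + k! a^(-k-1)` gives the upper bound.
-/

noncomputable def digamma : ℝ → ℝ := deriv (fun x => Real.log (Real.Gamma x))

noncomputable def polygamma (n : ℕ) : ℝ → ℝ := deriv^[n] digamma

open Set Filter Topology

section ShiftedPowerSums

variable {m : ℕ} {c x y : ℝ}

lemma hasDerivAt_inv_pow (m : ℕ) (hx : x ≠ 0) :
    HasDerivAt (fun z => (z ^ m)⁻¹) (-m * (x ^ (m + 1))⁻¹) x := by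
  refine ((hasDerivAt_pow m x).fun_inv (pow_ne_zero m hx)).congr_deriv ?_
  cases m with
  | zero => simp
  | succ j => rw [Nat.add_sub_cancel]; field_simp; ring

lemma hasDerivAt_inv_add_pow (m : ℕ) {b : ℝ} (hx : x + b ≠ 0) :
    HasDerivAt (fun z => ((z + b) ^ m)⁻¹) (-m * ((x + b) ^ (m + 1))⁻¹) x :=
  (hasDerivAt_inv_pow m hx).comp_add_const x b

lemma summable_inv_add_pow (hc : 0 < c) (hm : 2 ≤ m) : Summable fun n : ℕ => ((c + n) ^ m)⁻¹ := by
  refine ((Real.summable_one_div_nat_add_rpow c m).2 (by exact_mod_cast hm)).congr fun n => ?_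
  rw [abs_of_pos (by positivity), Real.rpow_natCast, one_div, add_comm]

lemma norm_neg_mul_inv_add_pow_le (hc : 0 < c) (hx : c ≤ x) (n : ℕ) :
    ‖-(m : ℝ) * ((x + n) ^ (m + 1))⁻¹‖ ≤ m * ((c + n) ^ (m + 1))⁻¹ := by
  rw [norm_mul, norm_neg, Real.norm_natCast, norm_inv, norm_pow,
    Real.norm_of_nonneg (by linarith [n.cast_nonneg (α := ℝ)] : (0 : ℝ) ≤ x + n)]
  gcongr

lemma summable_inv_add_pow_sub (hm : m ≠ 0) (hx : 0 < x) (hy : 0 < y) :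
    Summable fun n : ℕ => ((x + n) ^ m)⁻¹ - ((y + n) ^ m)⁻¹ := by
  have hc : 0 < min x y / 2 := by positivity
  have hc_lt : min x y / 2 < min x y := half_lt_self (lt_min hx hy)
  exact summable_of_summable_hasDerivAt_of_isPreconnected
    ((summable_inv_add_pow hc (by omega)).mul_left (m : ℝ)) isOpen_Ioi isPreconnected_Ioi
    (g := fun (n : ℕ) (z : ℝ) => ((z + n) ^ m)⁻¹ - ((y + n) ^ m)⁻¹)
    (fun n z hz => (hasDerivAt_inv_add_pow m
      (by have : 0 < z := hc.trans hz; positivity)).sub_const _)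
    (fun n z hz => norm_neg_mul_inv_add_pow_le hc (le_of_lt hz) n)
    (hc_lt.trans_le (min_le_right x y)) (by simp) (hc_lt.trans_le (min_le_left x y))

lemma hasDerivAt_tsum_inv_add_pow_sub (hm : m ≠ 0) (hx : 0 < x) (hy : 0 < y) :
    HasDerivAt (fun z : ℝ => ∑' n : ℕ, (((z + n) ^ m)⁻¹ - ((y + n) ^ m)⁻¹))
      (-(m : ℝ) * ∑' n : ℕ, ((x + n) ^ (m + 1))⁻¹) x := by
  have hc : 0 < min x y / 2 := by positivity
  have hc_lt : min x y / 2 < min x y := half_lt_self (lt_min hx hy)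
  rw [← tsum_mul_left]
  exact hasDerivAt_tsum_of_isPreconnected
    ((summable_inv_add_pow hc (by omega)).mul_left (m : ℝ)) isOpen_Ioi isPreconnected_Ioi
    (g := fun (n : ℕ) (z : ℝ) => ((z + n) ^ m)⁻¹ - ((y + n) ^ m)⁻¹)
    (fun n z hz => (hasDerivAt_inv_add_pow m
      (by have : 0 < z := hc.trans hz; positivity)).sub_const _)
    (fun n z hz => norm_neg_mul_inv_add_pow_le hc (le_of_lt hz) n)
    (hc_lt.trans_le (min_le_right x y)) (by simp) (hc_lt.trans_le (min_le_left x y))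

lemma hasSum_sub_succ_of_antitone {u : ℕ → ℝ} (hu : Antitone u) (hlim : Tendsto u atTop (𝓝 0)) :
    HasSum (fun n => u n - u (n + 1)) (u 0) := by
  rw [hasSum_iff_tendsto_nat_of_nonneg fun n => sub_nonneg.2 (hu n.le_succ)]
  simp_rw [Finset.sum_range_sub']
  simpa using tendsto_const_nhds.sub hlim

lemma hasSum_inv_add_pow_sub_succ (hm : m ≠ 0) (hx : 0 < x) :
    HasSum (fun n : ℕ => ((x + n) ^ m)⁻¹ - ((x + n + 1) ^ m)⁻¹) (x ^ m)⁻¹ := by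
  have hanti : Antitone fun n : ℕ => ((x + n) ^ m)⁻¹ := fun i j hij => by
    dsimp only; gcongr
  have hlim : Tendsto (fun n : ℕ => ((x + n) ^ m)⁻¹) atTop (𝓝 0) :=
    tendsto_inv_atTop_zero.comp <| (tendsto_pow_atTop hm).comp <|
      tendsto_atTop_add_const_left atTop x tendsto_natCast_atTop_atTop
  simpa [add_assoc] using hasSum_sub_succ_of_antitone hanti hlim

lemma tsum_inv_add_pow_sub_sub_tsum {z : ℝ} (hm : m ≠ 0) (hx : 0 < x) (hy : 0 < y) (hz : 0 < z) :
    ∑' n : ℕ, (((x + n) ^ m)⁻¹ - ((z + n) ^ m)⁻¹) - ∑' n : ℕ, (((y + n) ^ m)⁻¹ - ((z + n) ^ m)⁻¹)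
      = ∑' n : ℕ, (((x + n) ^ m)⁻¹ - ((y + n) ^ m)⁻¹) := by
  rw [← (summable_inv_add_pow_sub hm hx hz).tsum_sub (summable_inv_add_pow_sub hm hy hz)]
  congr 1 with n
  ring

lemma tsum_inv_add_one_add_pow_sub (hm : m ≠ 0) (hx : 0 < x) :
    ∑' n : ℕ, (((x + 1 + n) ^ m)⁻¹ - ((x + n) ^ m)⁻¹) = -(x ^ m)⁻¹ := by
  rw [← (hasSum_inv_add_pow_sub_succ hm hx).neg.tsum_eq]
  congr 1 with n
  ring_nf

end ShiftedPowerSums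

section JensenGap

variable {a : ℝ} {m : ℕ}

noncomputable def invPowJensenGap (a : ℝ) (m : ℕ) (t : ℝ) : ℝ :=
  (1 - a) * (t ^ m)⁻¹ + a * ((t + 1) ^ m)⁻¹ - ((t + a) ^ m)⁻¹

lemma invPowJensenGap_pos {t : ℝ} (ht : 0 < t) (ha : a ∈ Ioo 0 1) (hm : m ≠ 0) :
    0 < invPowJensenGap a m t := by
  obtain ⟨ha0, ha1⟩ := ha
  have h := (strictConvexOn_zpow (m := -(m : ℤ)) (by omega) (by omega)).2
    (mem_Ioi.2 ht) (mem_Ioi.2 (by linarith : 0 < t + 1)) (by linarith : t ≠ t + 1)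
    (by linarith : 0 < 1 - a) ha0 (by ring)
  simp only [smul_eq_mul, zpow_neg, zpow_natCast] at h
  rw [show (1 - a) * t + a * (t + 1) = t + a by ring] at h
  rw [invPowJensenGap]
  linarith

lemma hasDerivAt_invPowJensenGap {t : ℝ} (ht : 0 < t) (ha : 0 ≤ a) :
    HasDerivAt (invPowJensenGap a m) (-m * invPowJensenGap a (m + 1) t) t := by
  have h := (((hasDerivAt_inv_pow m ht.ne').const_mul (1 - a)).add
    ((hasDerivAt_inv_add_pow m (by positivity : t + 1 ≠ 0)).const_mul a)).sub
    (hasDerivAt_inv_add_pow m (by positivity : t + a ≠ 0))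
  refine h.congr_deriv ?_
  rw [invPowJensenGap]
  ring

lemma strictAntiOn_invPowJensenGap (ha : a ∈ Ioo 0 1) (hm : m ≠ 0) :
    StrictAntiOn (invPowJensenGap a m) (Ioi 0) := by
  refine strictAntiOn_of_deriv_neg (convex_Ioi 0)
    (fun t ht => (hasDerivAt_invPowJensenGap ht ha.1.le).continuousAt.continuousWithinAt)
    fun t ht => ?_
  rw [interior_Ioi] at ht
  rw [(hasDerivAt_invPowJensenGap ht ha.1.le).deriv, neg_mul]
  exact neg_neg_of_pos (mul_pos (by exact_mod_cast Nat.pos_of_ne_zero hm)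
    (invPowJensenGap_pos ht ha m.add_one_ne_zero))

lemma hasSum_invPowJensenGap {x : ℝ} (hm : m ≠ 0) (hx : 0 < x) (hxa : 0 < x + a) :
    HasSum (fun n : ℕ => invPowJensenGap a m (x + n))
      (∑' n : ℕ, (((x + n) ^ m)⁻¹ - ((x + a + n) ^ m)⁻¹) - a * (x ^ m)⁻¹) := by
  refine ((summable_inv_add_pow_sub hm hx hxa).hasSum.sub
    ((hasSum_inv_add_pow_sub_succ hm hx).mul_left a)).congr_fun fun n => ?_
  rw [invPowJensenGap]
  ring_nf

end JensenGap

lemma eqOn_Ioi_of_monotoneOn_of_add_one {F G : ℝ → ℝ} (hF : MonotoneOn F (Ioi 0))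
    (hG : MonotoneOn G (Ioi 0)) (hF1 : ∀ x, 0 < x → F (x + 1) = F x + x⁻¹)
    (hG1 : ∀ x, 0 < x → G (x + 1) = G x + x⁻¹) (h1 : F 1 = G 1) : EqOn F G (Ioi 0) := by
  have shift (n : ℕ) {x : ℝ} (hx : 0 < x) : F (x + n) - G (x + n) = F x - G x := by
    induction n with
    | zero => simp
    | succ n ih =>
      rw [Nat.cast_succ, ← add_assoc, hF1 _ (by positivity), hG1 _ (by positivity)]
      linarith
  have bound (N : ℕ) {y : ℝ} (hlo : (N : ℝ) + 1 ≤ y) (hhi : y ≤ N + 2) :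
      |F y - G y| ≤ ((N : ℝ) + 1)⁻¹ := by
    have hN : (0 : ℝ) < N + 1 := by positivity
    have hNy : y ∈ Ioi 0 := mem_Ioi.2 (hN.trans_le hlo)
    have hnat : F (N + 1) = G (N + 1) :=
      sub_eq_zero.1 (by simpa [add_comm, h1] using shift N one_pos)
    have hF2 := hF1 _ hN
    have hG2 := hG1 _ hN
    have := hF hN hNy hlo
    have := hF hNy (mem_Ioi.2 (by linarith)) (by linarith : y ≤ (N : ℝ) + 1 + 1)
    have := hG hN hNy hlo
    have := hG hNy (mem_Ioi.2 (by linarith)) (by linarith : y ≤ (N : ℝ) + 1 + 1)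
    rw [abs_sub_le_iff]
    constructor <;> linarith
  intro x hx
  have hx : 0 < x := hx
  have hsmall (n : ℕ) : |F x - G x| ≤ 1 / ((n : ℝ) + 1) := by
    rw [← shift (n + 1) hx, one_div]
    refine (bound (⌊x⌋₊ + n) ?_ ?_).trans ?_
    · push_cast; linarith [Nat.floor_le hx.le]
    · push_cast; linarith [Nat.lt_floor_add_one x]
    · gcongr; linarith [(⌊x⌋₊).cast_nonneg (α := ℝ)]
  have := ge_of_tendsto' tendsto_one_div_add_atTop_nhds_zero_nat hsmall
  exact sub_eq_zero.1 (abs_nonpos_iff.1 this)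

lemma differentiableAt_log_Gamma {x : ℝ} (hx : 0 < x) :
    DifferentiableAt ℝ (fun x => Real.log (Real.Gamma x)) x :=
  (Real.differentiableAt_Gamma fun m => by linarith [m.cast_nonneg (α := ℝ)]).log
    (Real.Gamma_pos_of_pos hx).ne'

lemma digamma_add_one {x : ℝ} (hx : 0 < x) : digamma (x + 1) = digamma x + x⁻¹ := by
  rw [digamma, ← deriv_comp_add_const, ← Real.deriv_log,
    ← deriv_add (differentiableAt_log_Gamma hx) (Real.differentiableAt_log hx.ne')]
  refine Filter.EventuallyEq.deriv_eq ?_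
  filter_upwards [eventually_gt_nhds hx] with y hy
  rw [Real.Gamma_add_one hy.ne', Real.log_mul hy.ne' (Real.Gamma_pos_of_pos hy).ne', add_comm]
  rfl

lemma monotoneOn_digamma : MonotoneOn digamma (Ioi 0) := by
  simpa [digamma, Function.comp_def] using
    Real.convexOn_log_Gamma.monotoneOn_deriv fun x hx => differentiableAt_log_Gamma hx

lemma digamma_eqOn_tsum : EqOn digamma
    (fun x => digamma 1 - ∑' n : ℕ, ((x + n)⁻¹ - (1 + (n : ℝ))⁻¹)) (Ioi 0) := by
  refine eqOn_Ioi_of_monotoneOn_of_add_one monotoneOn_digamma ?_ (fun x => digamma_add_one)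
    (fun x hx => ?_) (by simp)
  · intro x hx y hy hxy
    have hx : 0 < x := hx
    have hy : 0 < y := hy
    have := tsum_inv_add_pow_sub_sub_tsum one_ne_zero hx hy one_pos
    have : 0 ≤ ∑' n : ℕ, (((x + n) ^ 1)⁻¹ - ((y + n) ^ 1)⁻¹) :=
      tsum_nonneg fun n => sub_nonneg.2 (by gcongr)
    simp only [pow_one] at *
    linarith
  · have := tsum_inv_add_pow_sub_sub_tsum one_ne_zero (by positivity : 0 < x + 1) hx one_pos
    rw [tsum_inv_add_one_add_pow_sub one_ne_zero hx] at this
    simp only [pow_one] at this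
    linarith

lemma polygamma_succ (k : ℕ) : polygamma (k + 1) = deriv (polygamma k) := by
  rw [polygamma, polygamma, Function.iterate_succ']
  rfl

theorem polygamma_sub (k : ℕ) {x y : ℝ} (hx : 0 < x) (hy : 0 < y) :
    polygamma k y - polygamma k x = (-1) ^ (k + 1) * k.factorial *
      ∑' n : ℕ, (((y + n) ^ (k + 1))⁻¹ - ((x + n) ^ (k + 1))⁻¹) := by
  induction k generalizing x y with
  | zero =>
    have := tsum_inv_add_pow_sub_sub_tsum one_ne_zero hy hx one_pos
    simp only [polygamma, Function.iterate_zero_apply, digamma_eqOn_tsum hx, digamma_eqOn_tsum hy,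
      zero_add, pow_one, Nat.factorial_zero, Nat.cast_one] at this ⊢
    linarith
  | succ k ih =>
    have hderiv (z : ℝ) (hz : 0 < z) : polygamma (k + 1) z =
        (-1) ^ (k + 2) * (k + 1).factorial * ∑' n : ℕ, ((z + n) ^ (k + 2))⁻¹ := by
      have hev : polygamma k =ᶠ[𝓝 z] fun w => polygamma k 1 + (-1) ^ (k + 1) * k.factorial *
          ∑' n : ℕ, (((w + n) ^ (k + 1))⁻¹ - ((1 + (n : ℝ)) ^ (k + 1))⁻¹) := by
        filter_upwards [Ioi_mem_nhds hz] with w hw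
        rw [← ih one_pos hw]
        ring
      rw [polygamma_succ, hev.deriv_eq, (((hasDerivAt_tsum_inv_add_pow_sub k.add_one_ne_zero hz
        one_pos).const_mul _).const_add _).deriv, Nat.factorial_succ]
      push_cast
      ring
    rw [hderiv y hy, hderiv x hx, ← mul_sub, ← (summable_inv_add_pow hy (by omega)).tsum_sub
      (summable_inv_add_pow hx (by omega))]

lemma polygamma_add_one_sub (k : ℕ) {x : ℝ} (hx : 0 < x) :
    polygamma k (x + 1) - polygamma k x = (-1) ^ k * k.factorial * (x ^ (k + 1))⁻¹ := by
  rw [polygamma_sub k hx (by positivity), tsum_inv_add_one_add_pow_sub k.add_one_ne_zero hx]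
  ring

lemma polygamma_add_sub (k : ℕ) {a x : ℝ} (hx : 0 < x) (hxa : 0 < x + a) :
    polygamma k (x + a) - polygamma k x = (-1) ^ k * k.factorial *
      (a * (x ^ (k + 1))⁻¹ + ∑' n : ℕ, invPowJensenGap a (k + 1) (x + n)) := by
  have hneg : ∑' n : ℕ, (((x + a + n) ^ (k + 1))⁻¹ - ((x + n) ^ (k + 1))⁻¹) =
      -∑' n : ℕ, (((x + n) ^ (k + 1))⁻¹ - ((x + a + n) ^ (k + 1))⁻¹) := by
    rw [← tsum_neg]
    simp only [neg_sub]
  rw [polygamma_sub k hx hxa, (hasSum_invPowJensenGap k.add_one_ne_zero hx hxa).tsum_eq, hneg]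
  ring

theorem stmt_12 (a : ℝ) (ha : a ∈ Set.Ioo (0:ℝ) 1) (k : ℕ) (hk : Even k)
    (x : ℝ) (hx : 1 < x) :
    a * (Nat.factorial k : ℝ) / x ^ (k + 1) < polygamma k (x + a) - polygamma k x ∧
    polygamma k (x + a) - polygamma k x <
      polygamma k a - polygamma k 1 +
        (Nat.factorial k : ℝ) * (a / x ^ (k + 1) + 1 / a ^ (k + 1) - a) := by
  have hx0 : 0 < x := one_pos.trans hx
  have hsummable {z : ℝ} (hz : 0 < z) :
      Summable fun n : ℕ => invPowJensenGap a (k + 1) (z + n) :=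
    (hasSum_invPowJensenGap k.add_one_ne_zero hz (by linarith [ha.1])).summable
  have hgap_pos (n : ℕ) : 0 < invPowJensenGap a (k + 1) (x + n) :=
    invPowJensenGap_pos (by positivity) ha k.add_one_ne_zero
  have hgap_lt (n : ℕ) : invPowJensenGap a (k + 1) (x + n) < invPowJensenGap a (k + 1) (1 + n) :=
    strictAntiOn_invPowJensenGap ha k.add_one_ne_zero (show (0 : ℝ) < 1 + n by positivity)
      (show 0 < x + n by positivity) (by linarith)
  have hgap_sum_pos := (hsummable hx0).tsum_pos (fun n => (hgap_pos n).le) 0 (hgap_pos 0)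
  have hgap_sum_lt := (hsummable hx0).tsum_lt_tsum (fun n => (hgap_lt n).le) (hgap_lt 0)
    (hsummable one_pos)
  have hx_sub := polygamma_add_sub k hx0 (by linarith [ha.1] : 0 < x + a)
  have h1_sub := polygamma_add_sub k one_pos (by linarith [ha.1] : 0 < 1 + a)
  have ha_sub := polygamma_add_one_sub k ha.1
  simp only [hk.neg_one_pow, one_mul, one_pow, inv_one, mul_one] at hx_sub h1_sub ha_sub
  rw [add_comm a 1] at ha_sub
  have hfac : (0 : ℝ) < k.factorial := by exact_mod_cast k.factorial_pos
  simp only [div_eq_mul_inv, one_mul, hx_sub]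
  constructor
  · linarith [mul_pos hfac hgap_sum_pos]
  · linarith [mul_lt_mul_of_pos_left hgap_sum_lt hfac]
end

section
/- For every x > 1, one has 3/x⁴ + 14π⁴/15 - 99 < ψ'''(x + 1/2) - ψ'''(x) < 3/x⁴. -/
/-!
Differentiating the Bohr–Mollerup limit
`log Γ(x) = lim (x log n + log n! - ∑_{m ≤ n} log (x + m))` termwise (the derivatives converge
uniformly on bounded subsets of `(0, ∞)`) gives `ψ(x) = -γ - 1/x + ∑ (1/(m+1) - 1/(x+m+1))`, and
three more termwise differentiations give `ψ'''(x) = 6 ζ(4, x)`, where `ζ(s, x) = ∑ 1/(x+m)^s`.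
As `ζ(4, ·)` is decreasing, `ψ'''(x + 1/2) - ψ'''(x) < 0`. As `u ↦ u⁻⁴` is strictly convex, every
term of `ζ(4, x + 1/2) - ζ(4, x)` increases with `x`, so for `x > 1` the difference exceeds its
value at `x = 1`; the duplication formula `ζ(4, x) + ζ(4, x + 1/2) = 16 ζ(4, 2x)` together with
`ζ(4, 1) = π⁴/90` and `ζ(4, 2) = ζ(4, 1) - 1` makes that value `(14π⁴/15 - 96) / 6`.
-/

open Real Filter Finset Set Topology

theorem iterate_deriv_succ_apply_of_hasDerivAt {𝕜 F : Type*} [NontriviallyNormedField 𝕜]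
    [NormedAddCommGroup F] [NormedSpace 𝕜 F] {f f' : 𝕜 → F} {s : Set 𝕜} (hs : IsOpen s)
    (hf : ∀ y ∈ s, HasDerivAt f (f' y) y) (n : ℕ) {x : 𝕜} (hx : x ∈ s) :
    deriv^[n + 1] f x = deriv^[n] f' x := by
  rw [Function.iterate_succ_apply, ← iteratedDeriv_eq_iterate, ← iteratedDeriv_eq_iterate]
  exact Filter.EventuallyEq.iteratedDeriv_eq n
    (eventually_of_mem (hs.mem_nhds hx) fun y hy => (hf y hy).deriv)

theorem StrictConvexOn.map_add_sub_lt_map_add_sub {𝕜 : Type*} [Field 𝕜] [LinearOrder 𝕜]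
    [IsStrictOrderedRing 𝕜] {s : Set 𝕜} {f : 𝕜 → 𝕜} (hf : StrictConvexOn 𝕜 s f) {x y h : 𝕜}
    (hx : x ∈ s) (hxh : x + h ∈ s) (hy : y ∈ s) (hyh : y + h ∈ s) (hh : 0 < h) (hxy : x < y) :
    f (x + h) - f x < f (y + h) - f y := by
  have left := hf.secant_strict_mono hx hxh hyh (by linarith) (by linarith) (by linarith)
  have right := hf.secant_strict_mono hyh hx hy (by linarith) (by linarith) hxy
  rw [add_sub_cancel_left] at left
  rw [show y - (y + h) = -h by ring, div_neg, ← neg_div_neg_eq, neg_sub, neg_sub, ← neg_div,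
    neg_sub] at right
  exact (div_lt_div_iff_of_pos_right hh).mp (left.trans right)

-- The Hurwitz zeta function `ζ(s, x)` for real `x > 0`; Mathlib's `hurwitzZeta` takes `x` in `ℝ/ℤ`.
noncomputable def hurwitz (s : ℕ) (x : ℝ) : ℝ := ∑' m : ℕ, 1 / (x + m) ^ s

section Hurwitz

variable {s : ℕ} {x : ℝ}

theorem summable_one_div_add_pow (hs : 2 ≤ s) (hx : 0 < x) :
    Summable fun m : ℕ => 1 / (x + m) ^ s := by
  refine ((Real.summable_one_div_nat_add_rpow x s).mpr (by exact_mod_cast hs)).congr fun m => ?_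
  rw [abs_of_pos (by positivity), Real.rpow_natCast, add_comm]

theorem hasDerivAt_one_div_add_pow (a : ℝ) (hx : x + a ≠ 0) :
    HasDerivAt (fun y => 1 / (y + a) ^ s) (-s / (x + a) ^ (s + 1)) x := by
  have := (((hasDerivAt_id x).add_const a).fun_pow s).fun_inv (pow_ne_zero s hx)
  simp only [one_div, id] at this ⊢
  refine this.congr_deriv ?_
  rcases s with _ | s
  · simp
  · push_cast
    field_simp
    ring

theorem hasDerivAt_hurwitz (hs : 2 ≤ s) (hx : 0 < x) :
    HasDerivAt (hurwitz s) (-s * hurwitz (s + 1) x) x := by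
  have ha : 0 < x / 2 := by positivity
  have hpos : ∀ y ∈ Ioi (x / 2), ∀ m : ℕ, 0 < y + m := fun y (hy : x / 2 < y) m => by
    have := ha.trans hy; positivity
  have hu : Summable fun m : ℕ => s / (x / 2 + m) ^ (s + 1) :=
    ((summable_one_div_add_pow (s := s + 1) (by omega) ha).mul_left (s : ℝ)).congr fun m =>
      mul_one_div _ _
  have key := hasDerivAt_tsum_of_isPreconnected hu isOpen_Ioi isPreconnected_Ioi
    (fun m y hy => hasDerivAt_one_div_add_pow (s := s) m (hpos y hy m).ne')
    (fun m y hy => ?_) (show x ∈ Ioi (x / 2) by simp; linarith)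
    (summable_one_div_add_pow hs hx) (show x ∈ Ioi (x / 2) by simp; linarith)
  · refine key.congr_deriv ?_
    rw [hurwitz, ← tsum_mul_left]
    exact tsum_congr fun m => by ring
  · have : x / 2 < y := hy
    rw [norm_div, norm_neg, Real.norm_natCast, norm_pow, Real.norm_of_nonneg (hpos y hy m).le]
    gcongr

theorem hurwitz_add_one (hs : 2 ≤ s) (hx : 0 < x) :
    hurwitz s (x + 1) = hurwitz s x - 1 / x ^ s := by
  rw [hurwitz, hurwitz, (summable_one_div_add_pow hs hx).tsum_eq_zero_add]
  push_cast
  simp only [add_assoc, add_comm (1 : ℝ), add_zero]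
  ring

theorem hurwitz_two_mul (hs : 2 ≤ s) (hx : 0 < x) :
    hurwitz s (2 * x) = (hurwitz s x + hurwitz s (x + 1 / 2)) / 2 ^ s := by
  have hscale : ∀ y : ℝ, 1 / (2 * y) ^ s = 1 / y ^ s / 2 ^ s := fun y => by
    rw [mul_pow, div_div, mul_comm]
  have heven := ((summable_one_div_add_pow hs hx).hasSum).div_const (2 ^ s)
  have hodd := ((summable_one_div_add_pow hs (by positivity : 0 < x + 1 / 2)).hasSum).div_const
    (2 ^ s)
  refine (HasSum.even_add_odd (f := fun k : ℕ => 1 / (2 * x + k) ^ s) ?_ ?_).tsum_eq.trans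
    (add_div _ _ _).symm
  · refine heven.congr_fun fun k => ?_
    simp only [← hscale]
    push_cast
    ring_nf
  · refine hodd.congr_fun fun k => ?_
    simp only [← hscale]
    push_cast
    ring_nf

theorem hurwitz_strictAntiOn (hs : 2 ≤ s) : StrictAntiOn (hurwitz s) (Ioi 0) := by
  intro x (hx : 0 < x) y (hy : 0 < y) hxy
  have hlt : ∀ m : ℕ, 1 / (y + m) ^ s < 1 / (x + m) ^ s := fun m => by
    gcongr
  exact Summable.tsum_lt_tsum (i := 0) (fun m => (hlt m).le) (hlt 0)
    (summable_one_div_add_pow hs hy) (summable_one_div_add_pow hs hx)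

theorem strictConvexOn_one_div_pow (hs : s ≠ 0) :
    StrictConvexOn ℝ (Ioi 0) fun u : ℝ => 1 / u ^ s :=
  (strictConvexOn_zpow (m := -s) (by omega) (by omega)).congr fun u _ => by
    simp [zpow_neg]

theorem hurwitz_add_sub_hurwitz_strictMonoOn (hs : 2 ≤ s) {h : ℝ} (hh : 0 < h) :
    StrictMonoOn (fun x => hurwitz s (x + h) - hurwitz s x) (Ioi 0) := by
  intro x (hx : 0 < x) y (hy : 0 < y) hxy
  have hlt : ∀ m : ℕ, 1 / (x + h + m) ^ s - 1 / (x + m) ^ s <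
      1 / (y + h + m) ^ s - 1 / (y + m) ^ s := fun m => by
    have := (strictConvexOn_one_div_pow (s := s) (by omega)).map_add_sub_lt_map_add_sub
      (x := x + m) (y := y + m) (h := h) (by simp; positivity) (by simp; positivity)
      (by simp; positivity) (by simp; positivity) hh (by linarith)
    simpa only [add_right_comm _ (m : ℝ) h] using this
  have hsum : ∀ z > 0, Summable fun m : ℕ => 1 / (z + h + m) ^ s - 1 / (z + m) ^ s :=
    fun z hz => (summable_one_div_add_pow hs (by positivity)).sub (summable_one_div_add_pow hs hz)
  simp only [hurwitz]
  rw [← (summable_one_div_add_pow hs (by positivity)).tsum_sub (summable_one_div_add_pow hs hx),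
    ← (summable_one_div_add_pow hs (by positivity)).tsum_sub (summable_one_div_add_pow hs hy)]
  exact Summable.tsum_lt_tsum (i := 0) (fun m => (hlt m).le) (hlt 0) (hsum x hx) (hsum y hy)

theorem hurwitz_four_one : hurwitz 4 1 = π ^ 4 / 90 := by
  have := (hasSum_nat_add_iff' 1).mpr hasSum_zeta_four
  simp only [range_one, sum_singleton, CharP.cast_eq_zero] at this
  norm_num at this
  rw [hurwitz, ← this.tsum_eq]
  exact tsum_congr fun m => by ring_nf

theorem hurwitz_four_three_halves : hurwitz 4 (3 / 2) = π ^ 4 / 6 - 16 := by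
  have hdup := hurwitz_two_mul (s := 4) (by norm_num) one_pos
  have hshift := hurwitz_add_one (s := 4) (by norm_num) one_pos
  norm_num [hurwitz_four_one] at hdup hshift
  linarith

end Hurwitz

noncomputable def digammaSeries (x : ℝ) : ℝ :=
  -eulerMascheroniConstant - 1 / x + ∑' m : ℕ, (1 / ((m : ℝ) + 1) - 1 / (x + ((m : ℝ) + 1)))

theorem hasDerivAt_logGammaSeq (n : ℕ) {x : ℝ} (hx : 0 < x) :
    HasDerivAt (fun y => BohrMollerup.logGammaSeq y n)
      (log n - ∑ m ∈ range (n + 1), 1 / (x + m)) x := by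
  have hlog : HasDerivAt (fun y => ∑ m ∈ range (n + 1), log (y + m))
      (∑ m ∈ range (n + 1), 1 / (x + m)) x :=
    HasDerivAt.fun_sum fun m _ => by
      simpa [one_div] using ((hasDerivAt_id x).add_const (m : ℝ)).log (by positivity)
  exact (((hasDerivAt_mul_const (log n)).add_const _).sub hlog)

theorem tendstoUniformlyOn_digammaSeries {b : ℝ} :
    TendstoUniformlyOn (fun (n : ℕ) (y : ℝ) => log n - ∑ m ∈ range (n + 1), 1 / (y + m))
      digammaSeries atTop (Ioo 0 b) := by
  have hconst : Tendsto (fun n : ℕ => log n - harmonic n) atTop (𝓝 (-eulerMascheroniConstant)) :=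
    tendsto_harmonic_sub_log.neg.congr fun n => neg_sub _ _
  have hfixed : TendstoUniformlyOn (fun (_ : ℕ) (y : ℝ) => -(1 / y)) (fun y => -(1 / y)) atTop
      (Ioo 0 b) := fun u hu => Eventually.of_forall fun _ _ _ => refl_mem_uniformity hu
  -- `1 / (m + 1) - 1 / (y + m + 1) = y / ((m + 1) (y + m + 1)) ∈ [0, b / (m + 1) ^ 2]`
  have hbound : ∀ (m : ℕ), ∀ y ∈ Ioo 0 b,
      ‖1 / ((m : ℝ) + 1) - 1 / (y + ((m : ℝ) + 1))‖ ≤ b / ((m : ℝ) + 1) ^ 2 := by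
    rintro m y ⟨hy0, hyb⟩
    rw [div_sub_div _ _ (by positivity) (by positivity), Real.norm_of_nonneg (by
      apply div_nonneg <;> nlinarith [(m.cast_nonneg : (0 : ℝ) ≤ m)]), sq]
    apply div_le_div₀ (by linarith) (by linarith) (by positivity)
    nlinarith [(m.cast_nonneg : (0 : ℝ) ≤ m)]
  have hsum : Summable fun m : ℕ => b / ((m : ℝ) + 1) ^ 2 :=
    ((summable_one_div_add_pow le_rfl one_pos).mul_left b).congr fun m => by
      rw [mul_one_div, add_comm]
  refine (((hconst.tendstoUniformlyOn_const _).add hfixed).add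
    (tendstoUniformlyOn_tsum_nat hsum hbound)).congr ?_ |>.congr_right ?_
  · refine Eventually.of_forall fun n y _ => ?_
    simp only [Pi.add_apply, harmonic, sum_range_succ' (fun m => 1 / (y + m)),
      sum_sub_distrib]
    push_cast
    ring_nf
  · intro y _
    simp only [Pi.add_apply, digammaSeries]
    ring

theorem hasDerivAt_log_Gamma {x : ℝ} (hx : 0 < x) :
    HasDerivAt (fun y => log (Gamma y)) (digammaSeries x) x :=
  hasDerivAt_of_tendstoUniformlyOn isOpen_Ioo tendstoUniformlyOn_digammaSeries
    (Eventually.of_forall fun n _ hy => hasDerivAt_logGammaSeq n hy.1)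
    (fun _ hy => BohrMollerup.tendsto_log_gamma hy.1) ⟨hx, lt_add_one x⟩

theorem hasDerivAt_digammaSeries {x : ℝ} (hx : 0 < x) :
    HasDerivAt digammaSeries (hurwitz 2 x) x := by
  have ha : 0 < x / 2 := by positivity
  have hpos : ∀ y ∈ Ioi (x / 2), ∀ m : ℕ, 0 < y + m := fun y (hy : x / 2 < y) m => by
    have := ha.trans hy; positivity
  have hpartial : TendstoUniformlyOn (fun (n : ℕ) (y : ℝ) => ∑ m ∈ range (n + 1), 1 / (y + m) ^ 2)
      (hurwitz 2) atTop (Ioi (x / 2)) := by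
    have := tendstoUniformlyOn_tsum_nat (f := fun (m : ℕ) (y : ℝ) => 1 / (y + m) ^ 2)
      (summable_one_div_add_pow le_rfl ha) (fun m y hy => by
        rw [Real.norm_of_nonneg (by have := hpos y hy m; positivity)]
        have : x / 2 < y := hy
        gcongr)
    exact fun u hu => (tendsto_add_atTop_nat 1).eventually (this u hu)
  refine hasDerivAt_of_tendstoUniformlyOn isOpen_Ioi hpartial
    (Eventually.of_forall fun n y hy => ?_)
    (fun y hy => tendstoUniformlyOn_digammaSeries.tendsto_at ⟨ha.trans hy, lt_add_one y⟩)
    (show x ∈ Ioi (x / 2) by simp; linarith)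
  have hterm : ∀ m : ℕ, HasDerivAt (fun z : ℝ => 1 / (z + m)) (-1 / (y + m) ^ 2) y := fun m => by
    simpa using hasDerivAt_one_div_add_pow (s := 1) (m : ℝ) (hpos y hy m).ne'
  refine ((HasDerivAt.fun_sum fun m _ => hterm m).const_sub _).congr_deriv ?_
  simp [← sum_neg_distrib, neg_div]

theorem iterate_deriv_digamma {x : ℝ} (hx : 0 < x) : deriv^[3] digamma x = 6 * hurwitz 4 x := by
  have hthird : ∀ y ∈ Ioi (0 : ℝ), HasDerivAt (fun z => -(2 : ℕ) * hurwitz 3 z)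
      (-(2 : ℕ) * (-(3 : ℕ) * hurwitz 4 y)) y :=
    fun _ hy => (hasDerivAt_hurwitz (s := 3) (by norm_num) hy).const_mul _
  calc deriv^[3] digamma x = deriv^[3 + 1] (fun y => log (Gamma y)) x := rfl
    _ = deriv^[2 + 1] digammaSeries x :=
      iterate_deriv_succ_apply_of_hasDerivAt isOpen_Ioi (fun _ => hasDerivAt_log_Gamma) _ hx
    _ = deriv^[1 + 1] (hurwitz 2) x :=
      iterate_deriv_succ_apply_of_hasDerivAt isOpen_Ioi (fun _ => hasDerivAt_digammaSeries) _ hx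
    _ = deriv^[0 + 1] (fun z => -(2 : ℕ) * hurwitz 3 z) x :=
      iterate_deriv_succ_apply_of_hasDerivAt isOpen_Ioi (fun _ => hasDerivAt_hurwitz le_rfl) _ hx
    _ = 6 * hurwitz 4 x := by
      rw [iterate_deriv_succ_apply_of_hasDerivAt isOpen_Ioi hthird _ hx]
      norm_num
      ring

theorem stmt_19 (x : ℝ) (hx : 1 < x) :
    3 / x ^ 4 + 14 * Real.pi ^ 4 / 15 - 99 <
      deriv^[3] digamma (x + 1/2) - deriv^[3] digamma x ∧
    deriv^[3] digamma (x + 1/2) - deriv^[3] digamma x < 3 / x ^ 4 := by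
  have hx0 : 0 < x := one_pos.trans hx
  rw [iterate_deriv_digamma hx0, iterate_deriv_digamma (by positivity)]
  have hgap := hurwitz_add_sub_hurwitz_strictMonoOn (s := 4) (by norm_num) (h := 1 / 2)
    (by norm_num) (mem_Ioi.mpr one_pos) hx0 hx
  have hdecr := hurwitz_strictAntiOn (s := 4) (by norm_num) hx0 (by simp; positivity)
    (lt_add_of_pos_right x (by norm_num : (0 : ℝ) < 1 / 2))
  norm_num [hurwitz_four_one, hurwitz_four_three_halves] at hgap
  have hsmall : 3 / x ^ 4 < 3 := by
    rw [div_lt_iff₀ (by positivity)]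
    nlinarith [one_lt_pow₀ hx (by norm_num : 4 ≠ 0)]
  constructor <;> linarith [show 0 < 3 / x ^ 4 by positivity]
end
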